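/- arXiv:2405.01431 — 3 statements merged into one kernel-verified Lean document; each statement's English description precedes it below -/
import Mathlib

section
/- Let V be a real symmetric positive-definite 2n×2n matrix satisfying the uncertainty relation V + iΩ ≥ 0 (equivalently, V admits a symplectic diagonalization V = S D Sᵀ with D = diag(d₁,d₁,…,dₙ,dₙ) and all dᵢ ≥ 1). Then V⁻¹ ≤ Ω V Ωᵀ as positive semidefinite matrices, and consequently ‖V⁻¹‖ ≤ ‖V‖ for any orthogonally invariant norm. -/
/-!
Since `Ω` is orthogonal and commutes with `D`, and `S⁻¹ = Ω Sᵀ Ωᵀ`, one gets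
`V⁻¹ = Ω S D⁻¹ Sᵀ Ωᵀ`; hence `Ω V Ωᵀ - V⁻¹ = (Ω S) (D - D⁻¹) (Ω S)ᵀ`, which is positive
semidefinite because `dᵢ ≥ 1 ≥ dᵢ⁻¹`.

As `N (Ω V Ωᵀ) = N V`, the norm inequality follows once orthogonally invariant norms are
shown to be monotone on positive definite matrices. If `0 < A ≤ B`, a simultaneous
diagonalisation writes `B = X Xᵀ` and `A = X Γ Xᵀ` with `Γ` diagonal and `0 < Γ ≤ 1`. The
polar decomposition gives `N (M Mᵀ) = N (Mᵀ M)` for invertible `M`, so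
`N A = N (Γ^½ Xᵀ X Γ^½) ≤ N (Xᵀ X) = N B`. The inequality holds because `t ↦ N (diag t * Y)`
is convex and equals `N Y` at the sign vectors, the vertices of the cube `[-1, 1]ᵐ`.
-/

open Matrix

/-- The standard symplectic form `Ω`: block-diagonal with `n` blocks `[[0,1],[-1,0]]`. -/
def stdSymplecticForm (n : ℕ) : Matrix (Fin (2*n)) (Fin (2*n)) ℝ :=
  Matrix.of fun i j =>
    if (i : ℕ) % 2 = 0 ∧ (j : ℕ) = (i : ℕ) + 1 then 1
    else if (j : ℕ) % 2 = 0 ∧ (i : ℕ) = (j : ℕ) + 1 then -1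
    else 0

open Set
open scoped MatrixOrder

section StdSymplecticForm

variable {n : ℕ}

def stdSymplecticPartner (i : Fin (2 * n)) : Fin (2 * n) :=
  ⟨if (i : ℕ) % 2 = 0 then i + 1 else i - 1, by have := i.isLt; split <;> omega⟩

def stdSymplecticSign (i : Fin (2 * n)) : ℝ := if (i : ℕ) % 2 = 0 then 1 else -1

lemma stdSymplecticForm_apply (i j : Fin (2 * n)) :
    stdSymplecticForm n i j = if j = stdSymplecticPartner i then stdSymplecticSign i else 0 := by
  have := i.isLt
  simp only [stdSymplecticForm, of_apply, stdSymplecticSign, stdSymplecticPartner, Fin.ext_iff]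
  split_ifs <;> first | rfl | (exfalso; omega)

lemma stdSymplecticPartner_involutive : Function.Involutive (stdSymplecticPartner (n := n)) := by
  intro i
  ext
  simp only [stdSymplecticPartner]
  split_ifs <;> omega

lemma stdSymplecticPartner_div_two (i : Fin (2 * n)) :
    (stdSymplecticPartner i : ℕ) / 2 = i / 2 := by
  simp only [stdSymplecticPartner]
  split_ifs <;> omega

lemma stdSymplecticForm_mul_transpose : stdSymplecticForm n * (stdSymplecticForm n)ᵀ = 1 := by
  ext i j
  simp only [mul_apply, transpose_apply, stdSymplecticForm_apply, mul_ite, ite_mul, zero_mul,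
    mul_zero, Finset.sum_ite_eq', Finset.mem_univ, if_true, one_apply,
    stdSymplecticPartner_involutive.injective.eq_iff]
  rcases eq_or_ne i j with rfl | h
  · simp only [if_true, stdSymplecticSign]
    split_ifs <;> norm_num
  · simp [h, h.symm]

lemma stdSymplecticForm_mul_diagonal {d : Fin (2 * n) → ℝ}
    (hd : ∀ i j : Fin (2 * n), (i : ℕ) / 2 = (j : ℕ) / 2 → d i = d j) :
    stdSymplecticForm n * diagonal d = diagonal d * stdSymplecticForm n := by
  ext i j
  rw [mul_diagonal, diagonal_mul, stdSymplecticForm_apply]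
  split_ifs with h
  · rw [hd j i (h ▸ stdSymplecticPartner_div_two i), mul_comm]
  · simp

end StdSymplecticForm

section

variable {m : Type*} [Fintype m] [DecidableEq m]

section CommRing

variable {R : Type*} [CommRing R] {J S : Matrix m m R}

lemma transpose_mul_mul_self_eq_of_mul_mul_transpose_eq (hJ : J * Jᵀ = 1)
    (hS : S * J * Sᵀ = J) : Sᵀ * J * S = J := by
  have hSinv : J * Sᵀ * Jᵀ * S = 1 := mul_eq_one_comm.mp <| by
    rw [← mul_assoc, ← mul_assoc, hS, hJ]
  have hJJ : Jᵀ * J = 1 := mul_eq_one_comm.mp hJ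
  have h : Sᵀ * Jᵀ * S = Jᵀ := by
    calc Sᵀ * Jᵀ * S = Jᵀ * J * Sᵀ * Jᵀ * S := by rw [hJJ, one_mul]
      _ = Jᵀ := by simp only [mul_assoc] at hSinv ⊢; rw [hSinv, mul_one]
  simpa only [transpose_mul, transpose_transpose, mul_assoc] using congrArg transpose h

lemma inv_mul_mul_transpose_eq {D D' : Matrix m m R} (hJ : J * Jᵀ = 1)
    (hS : S * J * Sᵀ = J) (hD : D * D' = 1) (hJD' : J * D' = D' * J) :
    (S * D * Sᵀ)⁻¹ = J * S * D' * Sᵀ * Jᵀ := by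
  apply inv_eq_right_inv
  calc S * D * Sᵀ * (J * S * D' * Sᵀ * Jᵀ) = S * D * (Sᵀ * J * S) * D' * Sᵀ * Jᵀ := by
        simp only [mul_assoc]
    _ = S * (D * D') * J * Sᵀ * Jᵀ := by
        rw [transpose_mul_mul_self_eq_of_mul_mul_transpose_eq hJ hS]
        simp only [mul_assoc, hJD']
    _ = 1 := by rw [hD, mul_one, hS, hJ]

end CommRing

lemma posSemidef_mul_mul_transpose_sub_inv {J S : Matrix m m ℝ} {d : m → ℝ}
    (hd : ∀ i, 1 ≤ d i) (hJ : J * Jᵀ = 1) (hS : S * J * Sᵀ = J)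
    (hJd : J * diagonal d⁻¹ = diagonal d⁻¹ * J) :
    (J * (S * diagonal d * Sᵀ) * Jᵀ - (S * diagonal d * Sᵀ)⁻¹).PosSemidef := by
  have hdd : diagonal d * diagonal d⁻¹ = 1 := by
    rw [diagonal_mul_diagonal, ← diagonal_one]
    exact congrArg diagonal (funext fun i => mul_inv_cancel₀ (one_pos.trans_le (hd i)).ne')
  have hdiff : (diagonal d - diagonal d⁻¹).PosSemidef := by
    rw [diagonal_sub]
    exact posSemidef_diagonal_iff.mpr fun i =>
      sub_nonneg.mpr ((inv_le_one_of_one_le₀ (hd i)).trans (hd i))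
  have h := hdiff.mul_mul_conjTranspose_same (J * S)
  rw [conjTranspose_eq_transpose_of_trivial, transpose_mul, mul_sub, sub_mul] at h
  rw [inv_mul_mul_transpose_eq hJ hS hdd hJd]
  simpa only [mul_assoc] using h

lemma diagonal_mul_transpose_self_of_sign {s : m → ℝ} (hs : ∀ i, s i = -1 ∨ s i = 1) :
    diagonal s * (diagonal s)ᵀ = 1 := by
  rw [diagonal_transpose, diagonal_mul_diagonal, ← diagonal_one]
  exact congrArg diagonal (funext fun i => by rcases hs i with h | h <;> simp [h])

lemma Matrix.PosDef.exists_sqrt {B : Matrix m m ℝ} (hB : B.PosDef) :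
    ∃ R : Matrix m m ℝ, Rᵀ = R ∧ R * R = B ∧ IsUnit R :=
  ⟨CFC.sqrt B,
    (conjTranspose_eq_transpose_of_trivial _).symm.trans (CFC.sqrt_nonneg B).isSelfAdjoint,
    CFC.sqrt_mul_sqrt_self B hB.posSemidef.nonneg,
    (CFC.isUnit_sqrt_iff B hB.posSemidef.nonneg).mpr hB.isUnit⟩

-- `X = B^½ Q`, where `Q` diagonalises `B^-½ A B^-½ ≤ 1`.
lemma exists_eq_mul_diagonal_mul_transpose_of_le {A B : Matrix m m ℝ} (hA : A.PosDef)
    (hAB : A ≤ B) :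
    ∃ (X : Matrix m m ℝ) (γ : m → ℝ), IsUnit X ∧ (∀ i, 0 < γ i ∧ γ i ≤ 1) ∧
      A = X * diagonal γ * Xᵀ ∧ B = X * Xᵀ := by
  have hB : B.PosDef := by simpa using hA.add_posSemidef (le_iff.mp hAB)
  obtain ⟨R, hRsymm, hRR, hR⟩ := hB.exists_sqrt
  have hRdet : IsUnit R.det := (isUnit_iff_isUnit_det R).mp hR
  have hRinv : R⁻¹ᵀ = R⁻¹ := by rw [transpose_nonsing_inv, hRsymm]
  set G := R⁻¹ * A * R⁻¹ with hGdef
  have hG : G.PosDef := by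
    simpa [conjTranspose_eq_transpose_of_trivial, hRinv] using
      hA.conjTranspose_mul_mul_same <| mulVec_injective_of_isUnit <| isUnit_nonsing_inv_iff.mpr hR
  have hG1 : G ≤ 1 := by
    have h := (le_iff.mp hAB).conjTranspose_mul_mul_same R⁻¹
    rw [conjTranspose_eq_transpose_of_trivial, hRinv, mul_sub, sub_mul, ← hRR,
      ← mul_assoc, nonsing_inv_mul _ hRdet, one_mul, mul_nonsing_inv _ hRdet] at h
    exact le_iff.mpr h
  set Q : Matrix m m ℝ := (hG.isHermitian.eigenvectorUnitary : Matrix m m ℝ)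
  set γ := hG.isHermitian.eigenvalues
  have hQ : Q * Qᵀ = 1 := (mem_orthogonalGroup_iff m ℝ).mp hG.isHermitian.eigenvectorUnitary.2
  have hGQ : G = Q * diagonal γ * Qᵀ := by
    conv_lhs => rw [hG.isHermitian.spectral_theorem]
    simp [Unitary.conjStarAlgAut_apply, star_eq_conjTranspose,
      conjTranspose_eq_transpose_of_trivial, Q, γ]
  have hγ1 : ∀ i, γ i ≤ 1 := fun i =>
    (le_algebraMap_iff_spectrum_le hG.isHermitian.isSelfAdjoint).mp (by simpa using hG1) _
      (hG.isHermitian.eigenvalues_mem_spectrum_real i)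
  refine ⟨R * Q, γ, hR.mul (IsUnit.of_mul_eq_one _ hQ),
    fun i => ⟨hG.eigenvalues_pos i, hγ1 i⟩, ?_, ?_⟩
  · rw [transpose_mul, hRsymm]
    calc A = R * G * R := by
          simp only [hGdef, ← mul_assoc, mul_nonsing_inv _ hRdet, one_mul]
          rw [mul_assoc, nonsing_inv_mul _ hRdet, mul_one]
      _ = R * Q * diagonal γ * (Qᵀ * R) := by rw [hGQ]; simp only [mul_assoc]
  · rw [transpose_mul, hRsymm, ← hRR, ← mul_assoc, mul_assoc R, hQ, mul_one]

end

theorem ConvexOn.le_of_forall_abs_le_one {ι : Type*} [Finite ι] {f : (ι → ℝ) → ℝ}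
    (hf : ConvexOn ℝ univ f) {c : ℝ} (hc : ∀ s : ι → ℝ, (∀ i, s i = -1 ∨ s i = 1) → f s ≤ c)
    {t : ι → ℝ} (ht : ∀ i, |t i| ≤ 1) : f t ≤ c := by
  have hcube : t ∈ convexHull ℝ (univ.pi fun _ => ({-1, 1} : Set ℝ)) := by
    rw [convexHull_pi]
    intro i _
    rw [convexHull_pair, segment_eq_Icc (by norm_num)]
    exact abs_le.mp (ht i)
  obtain ⟨s, hs, hts⟩ := hf.exists_ge_of_mem_convexHull (subset_univ _) hcube
  exact hts.trans (hc s fun i => hs i (mem_univ i))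

structure IsOrthInvariantNorm {m : Type*} [Fintype m] [DecidableEq m]
    (N : Matrix m m ℝ → ℝ) : Prop where
  add_le : ∀ A B, N (A + B) ≤ N A + N B
  smul : ∀ (c : ℝ) A, N (c • A) = |c| * N A
  mul_mul : ∀ U W A : Matrix m m ℝ, U * Uᵀ = 1 → W * Wᵀ = 1 → N (U * A * W) = N A

namespace IsOrthInvariantNorm

variable {m : Type*} [Fintype m] [DecidableEq m] {N : Matrix m m ℝ → ℝ}

lemma convexOn_comp {E : Type*} [AddCommGroup E] [Module ℝ E] (hN : IsOrthInvariantNorm N)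
    (L : E →ₗ[ℝ] Matrix m m ℝ) : ConvexOn ℝ univ fun x => N (L x) := by
  refine ⟨convex_univ, fun x _ y _ a b ha hb _ => ?_⟩
  calc N (L (a • x + b • y)) = N (a • L x + b • L y) := by rw [map_add, map_smul, map_smul]
    _ ≤ N (a • L x) + N (b • L y) := hN.add_le _ _
    _ = a * N (L x) + b * N (L y) := by
        rw [hN.smul, hN.smul, abs_of_nonneg ha, abs_of_nonneg hb]

lemma diagonal_mul_le (hN : IsOrthInvariantNorm N) (X : Matrix m m ℝ) {s : m → ℝ}
    (hs : ∀ i, |s i| ≤ 1) : N (diagonal s * X) ≤ N X :=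
  ConvexOn.le_of_forall_abs_le_one
    (hN.convexOn_comp ((LinearMap.mulRight ℝ X).comp (diagonalLinearMap m ℝ ℝ))) (fun s hs => by
      simpa using (hN.mul_mul _ 1 X (diagonal_mul_transpose_self_of_sign hs) (by simp)).le) hs

lemma mul_diagonal_le (hN : IsOrthInvariantNorm N) (X : Matrix m m ℝ) {s : m → ℝ}
    (hs : ∀ i, |s i| ≤ 1) : N (X * diagonal s) ≤ N X :=
  ConvexOn.le_of_forall_abs_le_one
    (hN.convexOn_comp ((LinearMap.mulLeft ℝ X).comp (diagonalLinearMap m ℝ ℝ))) (fun s hs => by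
      simpa using (hN.mul_mul 1 _ X (by simp) (diagonal_mul_transpose_self_of_sign hs)).le) hs

-- `O = M (Mᵀ M)^-½` is the orthogonal factor in the polar decomposition of `M`.
lemma mul_transpose_self_eq (hN : IsOrthInvariantNorm N) {M : Matrix m m ℝ} (hM : IsUnit M) :
    N (M * Mᵀ) = N (Mᵀ * M) := by
  have hP : (Mᵀ * M).PosDef := by
    simpa [conjTranspose_eq_transpose_of_trivial] using
      PosDef.conjTranspose_mul_self M (mulVec_injective_of_isUnit hM)
  obtain ⟨T, hTsymm, hTT, hT⟩ := hP.exists_sqrt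
  have hTdet : IsUnit T.det := (isUnit_iff_isUnit_det T).mp hT
  set O := M * T⁻¹
  have hOt : Oᵀ = T⁻¹ * Mᵀ := by rw [transpose_mul, transpose_nonsing_inv, hTsymm]
  have hO : Oᵀ * O = 1 := by
    calc Oᵀ * O = T⁻¹ * (Mᵀ * M) * T⁻¹ := by rw [hOt]; simp only [O, mul_assoc]
      _ = 1 := by
        rw [← hTT, ← mul_assoc, nonsing_inv_mul _ hTdet, one_mul, mul_nonsing_inv _ hTdet]
  have hpolar : O * (Mᵀ * M) * Oᵀ = M * Mᵀ := by
    rw [hOt, ← hTT]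
    calc M * T⁻¹ * (T * T) * (T⁻¹ * Mᵀ) = M * (T⁻¹ * T) * (T * T⁻¹) * Mᵀ := by
          simp only [mul_assoc]
      _ = M * Mᵀ := by rw [nonsing_inv_mul _ hTdet, mul_nonsing_inv _ hTdet, mul_one, mul_one]
  rw [← hpolar, hN.mul_mul O Oᵀ _ (mul_eq_one_comm.mp hO) (by rwa [transpose_transpose])]

theorem le_of_le (hN : IsOrthInvariantNorm N) {A B : Matrix m m ℝ} (hA : A.PosDef)
    (hAB : A ≤ B) : N A ≤ N B := by
  obtain ⟨X, γ, hX, hγ, rfl, rfl⟩ := exists_eq_mul_diagonal_mul_transpose_of_le hA hAB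
  set p : m → ℝ := fun i => √(γ i)
  have hp : ∀ i, |p i| ≤ 1 := fun i => by
    rw [abs_of_nonneg (Real.sqrt_nonneg _)]
    exact Real.sqrt_le_one.mpr (hγ i).2
  have hpp : diagonal p * diagonal p = diagonal γ := by
    rw [diagonal_mul_diagonal]
    exact congrArg diagonal (funext fun i => Real.mul_self_sqrt (hγ i).1.le)
  have hM : IsUnit (X * diagonal p) := hX.mul <| isUnit_diagonal.mpr <|
    Pi.isUnit_iff.mpr fun i => (Real.sqrt_pos.mpr (hγ i).1).ne'.isUnit
  calc N (X * diagonal γ * Xᵀ) = N (X * diagonal p * (X * diagonal p)ᵀ) := by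
        rw [transpose_mul, diagonal_transpose, ← hpp]; simp only [mul_assoc]
    _ = N ((X * diagonal p)ᵀ * (X * diagonal p)) := hN.mul_transpose_self_eq hM
    _ = N (diagonal p * (Xᵀ * X * diagonal p)) := by
        rw [transpose_mul, diagonal_transpose]; simp only [mul_assoc]
    _ ≤ N (Xᵀ * X) := (hN.diagonal_mul_le _ hp).trans (hN.mul_diagonal_le _ hp)
    _ = N (X * Xᵀ) := (hN.mul_transpose_self_eq hX).symm

end IsOrthInvariantNorm

/-- Let `V` be a real symmetric positive-definite `2n×2n` matrix admitting a symplectic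
diagonalization `V = S D Sᵀ` with `D = diag(d₁,d₁,…,dₙ,dₙ)`, all `dᵢ ≥ 1` (this is the
uncertainty relation `V + iΩ ≥ 0`).  Then `V⁻¹ ≤ Ω V Ωᵀ` in the positive-semidefinite
order, and consequently `N V⁻¹ ≤ N V` for every orthogonally invariant norm `N`. -/
theorem covariance_inv_le_and_norm_le (n : ℕ)
    (V S D : Matrix (Fin (2*n)) (Fin (2*n)) ℝ)
    (hVpd : V.PosDef)
    (d : Fin (2*n) → ℝ) (hd : ∀ i, 1 ≤ d i)
    (hpair : ∀ i j : Fin (2*n), (i : ℕ) / 2 = (j : ℕ) / 2 → d i = d j)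
    (hD : D = Matrix.diagonal d)
    (hS : S * stdSymplecticForm n * Sᵀ = stdSymplecticForm n)
    (hdec : V = S * D * Sᵀ) :
    (stdSymplecticForm n * V * (stdSymplecticForm n)ᵀ - V⁻¹).PosSemidef ∧
    ∀ N : Matrix (Fin (2*n)) (Fin (2*n)) ℝ → ℝ,
      (∀ A B, N (A + B) ≤ N A + N B) →
      (∀ (c : ℝ) A, N (c • A) = |c| * N A) →
      (∀ (U W A : Matrix (Fin (2*n)) (Fin (2*n)) ℝ),
        U * Uᵀ = 1 → W * Wᵀ = 1 → N (U * A * W) = N A) →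
      N V⁻¹ ≤ N V := by
  have hΩ : stdSymplecticForm n * (stdSymplecticForm n)ᵀ = 1 := stdSymplecticForm_mul_transpose
  have hle : (stdSymplecticForm n * V * (stdSymplecticForm n)ᵀ - V⁻¹).PosSemidef := by
    subst hdec hD
    refine posSemidef_mul_mul_transpose_sub_inv hd hΩ hS (stdSymplecticForm_mul_diagonal ?_)
    intro i j hij
    simp only [Pi.inv_apply, hpair i j hij]
  refine ⟨hle, fun N hadd hsmul horth => ?_⟩
  calc N V⁻¹ ≤ N (stdSymplecticForm n * V * (stdSymplecticForm n)ᵀ) :=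
        IsOrthInvariantNorm.le_of_le ⟨hadd, hsmul, horth⟩ hVpd.inv (le_iff.mpr hle)
    _ = N V := horth _ _ _ hΩ (by rw [transpose_transpose]; exact mul_eq_one_comm.mp hΩ)
end

section
/- Let |0⟩, |φ⟩, |φ̃⟩ be unit vectors with |φ⟩, |φ̃⟩ orthogonal to |0⟩, let 0 < λ ≤ 1, and define |ψ_φ⟩ = √(1−λ)|0⟩ + √λ |φ⟩ and similarly |ψ_{φ̃}⟩. Then the trace distance between the corresponding pure states satisfies ‖ |ψ_φ⟩⟨ψ_φ| − |ψ_{φ̃}⟩⟨ψ_{φ̃}| ‖₁ ≥ √(λ/2) · ‖ |φ⟩⟨φ| − |φ̃⟩⟨φ̃| ‖₁. -/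
/-!
For unit vectors `u, v` put `c = ⟨u|v⟩`, `w = v - c u ⟂ u` and `t = ‖w‖ = √(1 - |c|²)`. Then
`(|u⟩⟨u| - |v⟩⟨v|)² = t² |u⟩⟨u| + |w⟩⟨w|`, whose positive square root `t |u⟩⟨u| + t⁻¹ |w⟩⟨w|`
has trace `2t`; this is the trace distance formula for pure states.

For the embedded states `⟨ψ_φ|ψ_φ̃⟩ = 1 - λ + λ c` with `c = ⟨φ|φ̃⟩`, and the claim reduces to
`λ/2 (1 - |c|²) ≤ 1 - |1 - λ z|²` with `z = 1 - c`, i.e. to `λ (λ - 1/2) |z|² ≤ λ Re z`. This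
follows from `|z|² ≤ 2 Re z`, which is `|c| ≤ 1`, and `λ ≤ 1`.
-/

open Matrix ComplexOrder

/-- The trace norm `‖A‖₁ = Tr √(AᴴA)` of a complex matrix. -/
noncomputable def traceNorm {ι : Type*} [Fintype ι] [DecidableEq ι] (A : Matrix ι ι ℂ) : ℝ :=
  (((Matrix.posSemidef_conjTranspose_mul_self A).1.eigenvectorUnitary : Matrix ι ι ℂ) *
      Matrix.diagonal (((↑) : ℝ → ℂ) ∘ Real.sqrt ∘ (Matrix.posSemidef_conjTranspose_mul_self A).1.eigenvalues) *
      (star (Matrix.posSemidef_conjTranspose_mul_self A).1.eigenvectorUnitary : Matrix ι ι ℂ)).trace.re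

section

variable {ι : Type*} [Fintype ι]

open scoped MatrixOrder in
lemma traceNorm_eq_re_trace_of_sq_eq [DecidableEq ι] {A B : Matrix ι ι ℂ} (hB : B.PosSemidef)
    (h : B ^ 2 = Aᴴ * A) : traceNorm A = B.trace.re := by
  have hA := posSemidef_conjTranspose_mul_self A
  have hsqrt : CFC.sqrt (Aᴴ * A) = B := CFC.sqrt_unique (by rw [← h, sq]) hB.nonneg
  rw [CFC.sqrt_eq_cfc, cfc_nnreal_eq_real _ (Aᴴ * A) hA.nonneg, hA.1.cfc_eq] at hsqrt
  rw [traceNorm, ← hsqrt]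
  have hf : (fun x : ℝ => √(max x 0)) = Real.sqrt := funext fun x => by
    rcases le_total x 0 with hx | hx
    · simp [hx, Real.sqrt_eq_zero'.mpr hx]
    · simp [hx]
  simp only [IsHermitian.cfc, Unitary.conjStarAlgAut_apply, Real.coe_sqrt, Real.coe_toNNReal', hf]
  rfl

lemma star_dotProduct_sub_smul_eq_zero (u v : ι → ℂ) (hu : star u ⬝ᵥ u = 1) :
    star u ⬝ᵥ (v - (star u ⬝ᵥ v) • u) = 0 := by
  simp [dotProduct_sub, dotProduct_smul, hu]

lemma star_sub_smul_dotProduct_sub_smul (u v : ι → ℂ) (hu : star u ⬝ᵥ u = 1) :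
    star (v - (star u ⬝ᵥ v) • u) ⬝ᵥ (v - (star u ⬝ᵥ v) • u)
      = star v ⬝ᵥ v - Complex.normSq (star u ⬝ᵥ v) := by
  rw [star_sub, sub_dotProduct, star_smul, smul_dotProduct,
    star_dotProduct_sub_smul_eq_zero u v hu, smul_zero, sub_zero, dotProduct_sub, dotProduct_smul,
    star_dotProduct v u, smul_eq_mul, Complex.star_def, Complex.mul_conj]

lemma normSq_star_dotProduct_le_one {u v : ι → ℂ} (hu : star u ⬝ᵥ u = 1)
    (hv : star v ⬝ᵥ v = 1) : Complex.normSq (star u ⬝ᵥ v) ≤ 1 := by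
  have h := dotProduct_star_self_nonneg (v - (star u ⬝ᵥ v) • u)
  rw [star_sub_smul_dotProduct_sub_smul u v hu, hv, ← Complex.ofReal_one,
    ← Complex.ofReal_sub, Complex.zero_le_real] at h
  linarith

lemma star_dotProduct_smul_add_smul (a b : ℝ) {e x y : ι → ℂ} (hx : star e ⬝ᵥ x = 0)
    (hy : star e ⬝ᵥ y = 0) :
    star ((a : ℂ) • e + (b : ℂ) • x) ⬝ᵥ ((a : ℂ) • e + (b : ℂ) • y)
      = ((a ^ 2 : ℝ) : ℂ) * (star e ⬝ᵥ e) + ((b ^ 2 : ℝ) : ℂ) * (star x ⬝ᵥ y) := by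
  have hx' : star x ⬝ᵥ e = 0 := by rw [star_dotProduct, hx, star_zero]
  simp only [star_add, star_smul, add_dotProduct, dotProduct_add, smul_dotProduct,
    dotProduct_smul, smul_eq_mul, Complex.star_def, Complex.conj_ofReal, hx', hy]
  push_cast
  ring

lemma vecMulVec_star_mul_vecMulVec_star (a b x y : ι → ℂ) :
    vecMulVec a (star b) * vecMulVec x (star y) = (star b ⬝ᵥ x) • vecMulVec a (star y) := by
  rw [vecMulVec_mul_vecMulVec, vecMulVec_smul]

theorem traceNorm_vecMulVec_sub_vecMulVec [DecidableEq ι] {u v : ι → ℂ}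
    (hu : star u ⬝ᵥ u = 1) (hv : star v ⬝ᵥ v = 1) :
    traceNorm (vecMulVec u (star u) - vecMulVec v (star v))
      = 2 * √(1 - Complex.normSq (star u ⬝ᵥ v)) := by
  set c := star u ⬝ᵥ v
  set s := 1 - Complex.normSq c
  set t := √s
  set w := v - c • u
  set U := vecMulVec u (star u)
  set W := vecMulVec w (star w)
  have huw : star u ⬝ᵥ w = 0 := star_dotProduct_sub_smul_eq_zero u v hu
  have hwu : star w ⬝ᵥ u = 0 := by rw [star_dotProduct, huw, star_zero]
  have hww : star w ⬝ᵥ w = s := by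
    rw [star_sub_smul_dotProduct_sub_smul u v hu, hv]; simp [s, c]
  have hts : t ^ 2 = s := Real.sq_sqrt (sub_nonneg.2 (normSq_star_dotProduct_le_one hu hv))
  have hA : (U - vecMulVec v (star v))ᴴ * (U - vecMulVec v (star v)) = (s : ℂ) • U + W := by
    simp only [U, W, conjTranspose_sub, conjTranspose_vecMulVec, star_star, sub_mul, mul_sub,
      vecMulVec_star_mul_vecMulVec_star, hu, hv, one_smul, star_dotProduct v u]
    ext i j
    simp only [RCLike.star_def, Matrix.sub_apply, vecMulVec_apply, Pi.star_apply,
      Matrix.smul_apply, smul_eq_mul, Complex.ofReal_sub, Complex.ofReal_one,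
      Complex.normSq_eq_conj_mul_self, star_sub, star_smul, Matrix.add_apply, Pi.sub_apply,
      Pi.smul_apply, s, w]
    ring
  -- If `t = 0` then `w = 0`, so the junk value `0⁻¹ = 0` in `B` below does no harm.
  have hW : ((t⁻¹ ^ 2 * s : ℝ) : ℂ) • W = W := by
    rcases eq_or_ne t 0 with h0 | h0
    · have : w = 0 := dotProduct_star_self_eq_zero.1 (by rw [hww, ← hts, h0]; simp)
      simp [W, this]
    · rw [← hts, inv_pow, inv_mul_cancel₀ (pow_ne_zero 2 h0), Complex.ofReal_one, one_smul]
  have hB : ((t : ℂ) • U + ((t⁻¹ : ℝ) : ℂ) • W) ^ 2 = (s : ℂ) • U + W := by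
    simp only [sq, add_mul, mul_add, smul_mul_smul_comm, U, W, vecMulVec_star_mul_vecMulVec_star,
      hu, huw, hwu, hww, zero_smul, smul_zero, add_zero, zero_add, one_smul, smul_smul]
    congr 1
    · rw [← hts]; push_cast; ring_nf
    · convert hW using 2; push_cast; ring
  have hBpsd : ((t : ℂ) • U + ((t⁻¹ : ℝ) : ℂ) • W).PosSemidef :=
    ((posSemidef_vecMulVec_self_star u).smul (by positivity)).add
      ((posSemidef_vecMulVec_self_star w).smul (by positivity))
  rw [traceNorm_eq_re_trace_of_sq_eq hBpsd (hB.trans hA.symm)]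
  simp only [trace_add, trace_smul, U, W, trace_vecMulVec, dotProduct_comm _ (star _), hu, hww,
    smul_eq_mul]
  norm_cast
  rw [← hts, sq, ← mul_assoc, inv_mul_mul_self]
  ring

end

lemma half_mul_one_sub_normSq_le {l : ℝ} (hl0 : 0 ≤ l) (hl1 : l ≤ 1) {c : ℂ}
    (hc : Complex.normSq c ≤ 1) :
    l / 2 * (1 - Complex.normSq c) ≤ 1 - Complex.normSq ((1 - l : ℝ) + l * c) := by
  simp only [Complex.normSq_apply, Complex.add_re, Complex.add_im, Complex.mul_re, Complex.mul_im,
    Complex.ofReal_re, Complex.ofReal_im] at hc ⊢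
  nlinarith [mul_nonneg (mul_nonneg hl0 (sub_nonneg.2 hl1))
      (add_nonneg (mul_self_nonneg (1 - c.re)) (mul_self_nonneg c.im)),
    mul_nonneg hl0 (sub_nonneg.2 hc)]

/-- Let `|0⟩, |φ⟩, |φ̃⟩` be unit vectors with `φ, φ̃ ⟂ |0⟩`, let `0 < λ ≤ 1`, and set
`|ψ_φ⟩ = √(1−λ)|0⟩ + √λ|φ⟩` (and similarly for `φ̃`).  Then
`‖ |ψ_φ⟩⟨ψ_φ| − |ψ_φ̃⟩⟨ψ_φ̃| ‖₁ ≥ √(λ/2) ‖ |φ⟩⟨φ| − |φ̃⟩⟨φ̃| ‖₁`. -/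
theorem traceNorm_embedded_pure_states_ge (d : ℕ) (e₀ φ φ' : Fin d → ℂ)
    (he₀ : star e₀ ⬝ᵥ e₀ = 1) (hφ : star φ ⬝ᵥ φ = 1) (hφ' : star φ' ⬝ᵥ φ' = 1)
    (horth : star e₀ ⬝ᵥ φ = 0) (horth' : star e₀ ⬝ᵥ φ' = 0)
    (l : ℝ) (hl0 : 0 < l) (hl1 : l ≤ 1)
    (ψ ψ' : Fin d → ℂ)
    (hψ : ψ = fun i => (Real.sqrt (1 - l) : ℂ) * e₀ i + (Real.sqrt l : ℂ) * φ i)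
    (hψ' : ψ' = fun i => (Real.sqrt (1 - l) : ℂ) * e₀ i + (Real.sqrt l : ℂ) * φ' i) :
    Real.sqrt (l / 2) *
        traceNorm (Matrix.vecMulVec φ (star φ) - Matrix.vecMulVec φ' (star φ')) ≤
      traceNorm (Matrix.vecMulVec ψ (star ψ) - Matrix.vecMulVec ψ' (star ψ')) := by
  have hψ_dot {x y : Fin d → ℂ} (hx : star e₀ ⬝ᵥ x = 0) (hy : star e₀ ⬝ᵥ y = 0) :
      star ((√(1 - l) : ℂ) • e₀ + (√l : ℂ) • x) ⬝ᵥ ((√(1 - l) : ℂ) • e₀ + (√l : ℂ) • y)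
        = ((1 - l : ℝ) : ℂ) + l * (star x ⬝ᵥ y) := by
    rw [star_dotProduct_smul_add_smul _ _ hx hy, he₀, Real.sq_sqrt (by linarith),
      Real.sq_sqrt hl0.le, mul_one]
  replace hψ : ψ = (√(1 - l) : ℂ) • e₀ + (√l : ℂ) • φ := hψ
  replace hψ' : ψ' = (√(1 - l) : ℂ) • e₀ + (√l : ℂ) • φ' := hψ'
  have hψψ : star ψ ⬝ᵥ ψ = 1 := by
    rw [hψ, hψ_dot horth horth, hφ]; push_cast; ring
  have hψ'ψ' : star ψ' ⬝ᵥ ψ' = 1 := by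
    rw [hψ', hψ_dot horth' horth', hφ']; push_cast; ring
  have hψψ' : star ψ ⬝ᵥ ψ' = ((1 - l : ℝ) : ℂ) + l * (star φ ⬝ᵥ φ') := by
    rw [hψ, hψ', hψ_dot horth horth']
  rw [traceNorm_vecMulVec_sub_vecMulVec hφ hφ', traceNorm_vecMulVec_sub_vecMulVec hψψ hψ'ψ',
    hψψ']
  calc √(l / 2) * (2 * √(1 - Complex.normSq (star φ ⬝ᵥ φ')))
      = 2 * √(l / 2 * (1 - Complex.normSq (star φ ⬝ᵥ φ'))) := by
        rw [Real.sqrt_mul (by positivity)]; ring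
    _ ≤ _ := by
        gcongr
        exact half_mul_one_sub_normSq_le hl0.le hl1 (normSq_star_dotProduct_le_one hφ hφ')
end

section
/- On n bosonic modes, the operator identity Σ_{j,k=1}^{2n} {R̂ⱼ, R̂ₖ}² = 16 Êₙ² + 6n·1 holds, where Êₙ = (1/2) R̂ᵀR̂ and {A,B} = AB + BA. -/
/-- Entries of the standard symplectic form `Ω` (block-diagonal with blocks `[[0,1],[-1,0]]`),
as complex numbers. -/
def OmegaEnt {n : ℕ} (j k : Fin (2 * n)) : ℂ :=
  if (j : ℕ) % 2 = 0 ∧ (k : ℕ) = (j : ℕ) + 1 then 1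
  else if (k : ℕ) % 2 = 0 ∧ (j : ℕ) = (k : ℕ) + 1 then -1
  else 0

lemma Omega_antisymm {n : ℕ} (j k : Fin (2*n)) : OmegaEnt k j = - OmegaEnt j k := by
  unfold OmegaEnt
  split_ifs <;> (try norm_num) <;> omega

def pIdx {n : ℕ} (j : Fin (2*n)) : Fin (2*n) :=
  ⟨if (j:ℕ) % 2 = 0 then (j:ℕ)+1 else (j:ℕ)-1, by
    rcases j with ⟨j, hj⟩; dsimp; split_ifs <;> omega⟩

lemma pIdx_val {n : ℕ} (j : Fin (2*n)) :
    ((pIdx j : Fin (2*n)) : ℕ) = if (j:ℕ) % 2 = 0 then (j:ℕ)+1 else (j:ℕ)-1 := rfl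

lemma sum_omega_sq_row {n : ℕ} (j : Fin (2*n)) :
    ∑ k, (OmegaEnt j k)^2 = 1 := by
  rw [Finset.sum_eq_single_of_mem (pIdx j) (Finset.mem_univ _)]
  · unfold OmegaEnt
    rw [pIdx_val]
    by_cases h : (j:ℕ) % 2 = 0
    · rw [if_pos h, if_pos ⟨h, rfl⟩]; norm_num
    · rw [if_neg h, if_neg (by omega), if_pos (by omega)]; norm_num
  · intro k _ hk
    have hne : (k : ℕ) ≠ ((pIdx j : Fin (2*n)) : ℕ) := fun h => hk (Fin.ext h)
    rw [pIdx_val] at hne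
    unfold OmegaEnt
    rw [if_neg (by by_cases h : (j:ℕ) % 2 = 0 <;> simp [h] at hne ⊢ <;> omega),
        if_neg (by by_cases h : (j:ℕ) % 2 = 0 <;> simp [h] at hne ⊢ <;> omega)]
    norm_num

lemma sum_omega_sq (n : ℕ) :
    ∑ j : Fin (2*n), ∑ k : Fin (2*n), (OmegaEnt j k)^2 = 2*n := by
  simp [sum_omega_sq_row]

lemma expand_sq (A : Type*) [Ring A] [Algebra ℂ A] (X W : A) (c : ℂ)
    (h2 : X*X = W - c•X) :
    (X + (X - c•(1:A)))^2 = (4:ℂ)•W - (8*c)•X + (c^2)•(1:A) := by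
  have e1 : (X + (X - c•(1:A)))^2 = (4:ℂ)•(X*X) - (4*c)•X + (c^2)•(1:A) := by
    simp only [pow_two, mul_sub, sub_mul, mul_add, add_mul, smul_mul_assoc,
      mul_smul_comm, smul_smul, smul_sub, sub_smul, mul_one, one_mul]
    module
  rw [e1, h2]
  simp only [smul_sub, smul_smul]
  module

/-- On `n` bosonic modes, if the quadratures `R j` satisfy the canonical commutation relations
`[R j, R k] = i Ω_{jk} 1`, then `∑_{j,k} {R j, R k}² = 16 Êₙ² + 6n·1`, where
`Êₙ = (1/2) R̂ᵀ R̂ = (1/2) ∑ⱼ (R j)²` and `{A,B} = AB + BA`. -/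
theorem sum_sq_anticommutator_quadratures (n : ℕ) (A : Type*) [Ring A] [Algebra ℂ A]
    (R : Fin (2 * n) → A)
    (hCCR : ∀ j k, R j * R k - R k * R j = (Complex.I * OmegaEnt j k) • (1 : A))
    (En : A) (hEn : En = ((1 : ℂ) / 2) • ∑ j, R j * R j) :
    ∑ j, ∑ k, (R j * R k + R k * R j) ^ 2 =
      (16 : ℂ) • En ^ 2 + ((6 * n : ℂ)) • (1 : A) := by
  have hcomm : ∀ j k, R k * R j = R j * R k - (Complex.I * OmegaEnt j k) • (1:A) := by
    intro j k; rw [← hCCR j k]; abel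
  have hXX : ∀ j k, (R j * R k) * (R j * R k)
      = (R j * R j) * (R k * R k) - (Complex.I * OmegaEnt j k) • (R j * R k) := by
    intro j k
    calc (R j * R k) * (R j * R k) = R j * (R k * R j) * R k := by noncomm_ring
    _ = R j * (R j * R k - (Complex.I * OmegaEnt j k) • (1:A)) * R k := by rw [hcomm]
    _ = (R j * R j) * (R k * R k) - (Complex.I * OmegaEnt j k) • (R j * R k) := by
        simp only [mul_sub, sub_mul, mul_smul_comm, smul_mul_assoc, mul_one, one_mul]
        noncomm_ring
  have hpt : ∀ j k, (R j * R k + R k * R j)^2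
      = (4:ℂ)•((R j * R j) * (R k * R k))
        - (8*(Complex.I * OmegaEnt j k))•(R j * R k)
        + ((Complex.I * OmegaEnt j k)^2)•(1:A) := by
    intro j k
    rw [hcomm j k]
    exact expand_sq A (R j * R k) _ _ (hXX j k)
  set T : A := ∑ j, ∑ k, (OmegaEnt j k) • (R j * R k) with hT
  have hswap : T = ∑ j, ∑ k, (-(OmegaEnt j k)) • (R k * R j) := by
    rw [hT, Finset.sum_comm]
    exact Finset.sum_congr rfl fun x _ => Finset.sum_congr rfl fun y _ => by
      rw [Omega_antisymm]
  have hTT : T + T = ((2*n:ℂ)*Complex.I) • (1:A) := by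
    nth_rewrite 2 [hswap]
    rw [hT, ← Finset.sum_add_distrib]
    calc (∑ j, ((∑ k, (OmegaEnt j k) • (R j * R k)) + ∑ k, (-(OmegaEnt j k)) • (R k * R j)))
        = ∑ j, ∑ k, (OmegaEnt j k) • (R j * R k - R k * R j) := by
          refine Finset.sum_congr rfl fun j _ => ?_
          rw [← Finset.sum_add_distrib]
          exact Finset.sum_congr rfl fun k _ => by rw [smul_sub, neg_smul]; abel
      _ = ∑ j, ∑ k, (Complex.I * (OmegaEnt j k)^2) • (1:A) := by
          refine Finset.sum_congr rfl fun j _ => Finset.sum_congr rfl fun k _ => ?_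
          rw [hCCR j k, smul_smul]; ring_nf
      _ = ((2*n:ℂ)*Complex.I) • (1:A) := by
          simp only [← Finset.sum_smul]
          congr 1
          rw [show (∑ j : Fin (2*n), ∑ k : Fin (2*n), Complex.I * (OmegaEnt j k)^2)
              = Complex.I * ∑ j : Fin (2*n), ∑ k : Fin (2*n), (OmegaEnt j k)^2 by
            rw [Finset.mul_sum]; exact Finset.sum_congr rfl fun j _ => by rw [Finset.mul_sum]]
          rw [sum_omega_sq]; ring
  have hTval : T = ((n:ℂ)*Complex.I) • (1:A) := by
    have h2 : (2:ℂ) • T = ((2*n:ℂ)*Complex.I) • (1:A) := by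
      rw [two_smul]; exact hTT
    have := congrArg (fun x => ((2:ℂ)⁻¹) • x) h2
    simpa [smul_smul, mul_comm, mul_assoc, mul_left_comm] using this
  calc ∑ j, ∑ k, (R j * R k + R k * R j) ^ 2
      = ∑ j, ∑ k, ((4:ℂ)•((R j * R j) * (R k * R k))
        - (8*(Complex.I * OmegaEnt j k))•(R j * R k)
        + ((Complex.I * OmegaEnt j k)^2)•(1:A)) :=
        Finset.sum_congr rfl fun j _ => Finset.sum_congr rfl fun k _ => hpt j k
    _ = (4:ℂ)•((∑ j, R j * R j) * (∑ j, R j * R j))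
        - (8*Complex.I)•T
        + (-(2*n:ℂ))•(1:A) := by
        simp only [Finset.sum_add_distrib, Finset.sum_sub_distrib]
        congr 1
        · congr 1
          · rw [Finset.sum_mul_sum, Finset.smul_sum]
            refine Finset.sum_congr rfl fun j _ => ?_
            rw [Finset.smul_sum]
          · rw [hT, Finset.smul_sum]
            refine Finset.sum_congr rfl fun j _ => ?_
            rw [Finset.smul_sum]
            refine Finset.sum_congr rfl fun k _ => ?_
            rw [smul_smul]
            congr 1
            ring
        · simp only [← Finset.sum_smul]
          congr 1
          rw [show (∑ j : Fin (2*n), ∑ k : Fin (2*n), (Complex.I * OmegaEnt j k)^2)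
              = (Complex.I)^2 * ∑ j : Fin (2*n), ∑ k : Fin (2*n), (OmegaEnt j k)^2 by
            rw [Finset.mul_sum]
            refine Finset.sum_congr rfl fun j _ => ?_
            rw [Finset.mul_sum]
            exact Finset.sum_congr rfl fun k _ => by ring]
          rw [sum_omega_sq, Complex.I_sq]; ring
    _ = (16 : ℂ) • En ^ 2 + ((6 * n : ℂ)) • (1 : A) := by
        rw [hTval, hEn, smul_smul, pow_two, smul_mul_assoc, mul_smul_comm, smul_smul, smul_smul]
        have : (8*Complex.I) * ((n:ℂ)*Complex.I) = -(8*n:ℂ) := by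
          rw [mul_assoc, mul_comm Complex.I, mul_assoc, Complex.I_mul_I]; ring
        rw [this]
        match_scalars <;> ring
end
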